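/- Let n ≥ 1, r₀ > 0, and let μ be a finite Borel measure on ℝ^n such that, for some A > 0, α ∈ [0, n], and p > max{1, n − α}, one has ∫_{ℝ^n} μ(B(z,s))^{1/(p-1)} dμ(z) ≤ A^{1/(p-1)} · s^{α/(p-1)} · μ(ℝ^n) for all s ∈ (0, 2r₀) (closed balls). Then for every Borel measurable f : ℝ^n → [0,∞] and every r ∈ (0, r₀): ∫_{B(0,r)} ∫_0^1 ∫_{ℝ^n} f(z + t·x) dμ(z) dt dx ≤ (2^{α/p}·A^{1/p}·p/(p − n + α)) · r^{α/p} · [Leb(B(0,r))·μ(ℝ^n)]^{(p-1)/p} · ‖f‖_{L^p(Ω)}, where Ω = N(spt μ, r) is the closed r-neighborhood of the support of μ and the outer integral in x is with respect to Lebesgue measure on B(0,r). -/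

import Mathlib

/-!
Fix `t ∈ (0, 1]`. The substitution `y = z + t • x` turns the integral over `x ∈ B(0, r)` into
`t⁻ⁿ ∫ f(y) μ(B(y, tr)) dy`. The weight `μ(B(y, tr))` vanishes off `Ω = N(spt μ, r)`, so Hölder
bounds this by `‖f‖_{L^p(Ω)}` times the `L^{p/(p-1)}` norm of the weight, and by Fubini
together with `B(y, s) ⊆ B(z, 2s)` for `y ∈ B(z, s)` that norm is controlled by
`|B(0, s)| ∫ μ(B(z, 2s))^{1/(p-1)} dμ(z)` with `s = tr`, to which the growth condition applies.
The result is `t^{(α-n)/p}` times a constant, and `p > n - α` makes this integrable on `(0, 1]`,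
with integral `p / (p - n + α)`.
-/

open MeasureTheory Set Metric
open scoped ENNReal

def msupport {X : Type*} [TopologicalSpace X] [MeasurableSpace X] (μ : Measure X) :
    Set X :=
  {x | ∀ U : Set X, IsOpen U → x ∈ U → 0 < μ U}

open Module

theorem msupport_eq_support {X : Type*} [TopologicalSpace X] [MeasurableSpace X]
    (μ : Measure X) : msupport μ = μ.support := by
  ext x
  rw [Measure.mem_support_iff_forall]
  refine ⟨fun h U hU => ?_, fun h U hUo hxU => h U (hUo.mem_nhds hxU)⟩
  obtain ⟨V, hVU, hVo, hxV⟩ := mem_nhds_iff.1 hU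
  exact (h V hVo hxV).trans_le (measure_mono hVU)

section MetricSpace

variable {X : Type*} [PseudoMetricSpace X] [MeasurableSpace X]

theorem measure_closedBall_eq_zero_of_notMem_cthickening [HereditarilyLindelofSpace X]
    {μ : Measure X} {y : X} {r s : ℝ} (hsr : s ≤ r) (hy : y ∉ cthickening r (msupport μ)) :
    μ (closedBall y s) = 0 := by
  rw [msupport_eq_support] at hy
  have hsub : closedBall y s ⊆ μ.supportᶜ := fun w hw hwS =>
    hy (mem_cthickening_of_dist_le y w r _ hwS ((mem_closedBall'.1 hw).trans hsr))
  exact measure_mono_null hsub μ.measure_compl_support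

variable [OpensMeasurableSpace X] [SecondCountableTopology X]

theorem measurableSet_dist_le (s : ℝ) : MeasurableSet {q : X × X | dist q.2 q.1 ≤ s} :=
  (isClosed_le (continuous_snd.dist continuous_fst) continuous_const).measurableSet

theorem measurable_measure_closedBall (μ : Measure X) [SFinite μ] (s : ℝ) :
    Measurable fun y => μ (closedBall y s) :=
  measurable_measure_prodMk_left (measurableSet_dist_le s)

theorem lintegral_setLIntegral_closedBall (μ ν : Measure X) [SFinite μ] [SFinite ν]
    {g : X → ℝ≥0∞} (hg : Measurable g) (s : ℝ) :
    ∫⁻ z, ∫⁻ y in closedBall z s, g y ∂ν ∂μ = ∫⁻ y, g y * μ (closedBall y s) ∂ν := by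
  set S := {q : X × X | dist q.2 q.1 ≤ s}
  calc ∫⁻ z, ∫⁻ y in closedBall z s, g y ∂ν ∂μ
      = ∫⁻ z, ∫⁻ y, S.indicator (fun q => g q.2) (z, y) ∂ν ∂μ := by
        refine lintegral_congr fun z => ?_
        rw [← lintegral_indicator measurableSet_closedBall]
        rfl
    _ = ∫⁻ y, ∫⁻ z, (closedBall y s).indicator (fun _ => g y) z ∂μ ∂ν := by
        have hmeas : AEMeasurable
            (Function.uncurry fun z y => S.indicator (fun q => g q.2) (z, y)) (μ.prod ν) :=
          ((hg.comp measurable_snd).indicator (measurableSet_dist_le s)).aemeasurable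
        rw [lintegral_lintegral_swap hmeas]
        refine lintegral_congr fun y => lintegral_congr fun z => ?_
        simp only [S, indicator, mem_ofPred_eq, mem_closedBall, dist_comm]
    _ = ∫⁻ y, g y * μ (closedBall y s) ∂ν := by
        simp only [lintegral_indicator_const measurableSet_closedBall]

theorem lintegral_measure_closedBall_rpow_add_one_le (μ ν : Measure X) [SFinite μ] [SFinite ν]
    {q : ℝ} (hq : 0 ≤ q) (s : ℝ) :
    ∫⁻ y, μ (closedBall y s) ^ (q + 1) ∂ν ≤
      ∫⁻ z, μ (closedBall z (2 * s)) ^ q * ν (closedBall z s) ∂μ :=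
  calc ∫⁻ y, μ (closedBall y s) ^ (q + 1) ∂ν
      = ∫⁻ y, μ (closedBall y s) ^ q * μ (closedBall y s) ∂ν := by
        simp only [ENNReal.rpow_add_of_nonneg _ _ hq zero_le_one, ENNReal.rpow_one]
    _ = ∫⁻ z, ∫⁻ y in closedBall z s, μ (closedBall y s) ^ q ∂ν ∂μ :=
        (lintegral_setLIntegral_closedBall μ ν
          ((measurable_measure_closedBall μ s).pow_const q) s).symm
    _ ≤ ∫⁻ z, ∫⁻ _ in closedBall z s, μ (closedBall z (2 * s)) ^ q ∂ν ∂μ := by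
        refine lintegral_mono fun z => setLIntegral_mono' measurableSet_closedBall fun y hy => ?_
        refine ENNReal.rpow_le_rpow (measure_mono (closedBall_subset_closedBall' ?_)) hq
        linarith [mem_closedBall.1 hy]
    _ = ∫⁻ z, μ (closedBall z (2 * s)) ^ q * ν (closedBall z s) ∂μ := by
        simp only [setLIntegral_const]

theorem lintegral_mul_measure_closedBall_le (μ ν : Measure X) [SFinite μ] [SFinite ν]
    {p : ℝ} (hp : 1 < p) {f : X → ℝ≥0∞} (hf : Measurable f) {r s : ℝ} (hsr : s ≤ r) :
    ∫⁻ y, f y * μ (closedBall y s) ∂ν ≤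
      (∫⁻ y in cthickening r (msupport μ), f y ^ p ∂ν) ^ (1 / p) *
        (∫⁻ z, μ (closedBall z (2 * s)) ^ (1 / (p - 1)) * ν (closedBall z s) ∂μ) ^
          ((p - 1) / p) := by
  set Ω := cthickening r (msupport μ)
  have hsupp : (Function.support fun y => f y * μ (closedBall y s)) ⊆ Ω := fun y hy => by
    by_contra hyΩ
    simp [measure_closedBall_eq_zero_of_notMem_cthickening hsr hyΩ] at hy
  have hconj : p.HolderConjugate (p / (p - 1)) := .conjExponent hp
  have hexp : p / (p - 1) = 1 / (p - 1) + 1 := by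
    field_simp [(sub_pos.2 hp).ne']
    ring
  have hbound : ∫⁻ y in Ω, μ (closedBall y s) ^ (p / (p - 1)) ∂ν ≤
      ∫⁻ z, μ (closedBall z (2 * s)) ^ (1 / (p - 1)) * ν (closedBall z s) ∂μ :=
    calc ∫⁻ y in Ω, μ (closedBall y s) ^ (p / (p - 1)) ∂ν
        ≤ ∫⁻ y, μ (closedBall y s) ^ (p / (p - 1)) ∂ν := setLIntegral_le_lintegral _ _
      _ ≤ _ := hexp ▸ lintegral_measure_closedBall_rpow_add_one_le μ ν
            (one_div_nonneg.2 (by linarith)) s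
  calc ∫⁻ y, f y * μ (closedBall y s) ∂ν
      = ∫⁻ y in Ω, f y * μ (closedBall y s) ∂ν := (setLIntegral_eq_of_support_subset hsupp).symm
    _ ≤ (∫⁻ y in Ω, f y ^ p ∂ν) ^ (1 / p) *
          (∫⁻ y in Ω, μ (closedBall y s) ^ (p / (p - 1)) ∂ν) ^ (1 / (p / (p - 1))) :=
        ENNReal.lintegral_mul_le_Lp_mul_Lq _ hconj hf.aemeasurable
          (measurable_measure_closedBall μ s).aemeasurable
    _ ≤ _ := by
        rw [one_div_div]
        have he : 0 ≤ (p - 1) / p := div_nonneg (by linarith) (by linarith)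
        exact mul_le_mul_right (ENNReal.rpow_le_rpow hbound he) _

end MetricSpace

theorem inv_pow_mul_rpow_growth_eq {n : ℕ} {t A r α p : ℝ} (ht : 0 < t) (hA : 0 < A) (hr : 0 < r)
    (hp : 1 < p) :
    (t ^ n)⁻¹ * (t ^ n * (A ^ (1 / (p - 1)) * (2 * (t * r)) ^ (α / (p - 1)))) ^ ((p - 1) / p) =
      t ^ ((α - n) / p) * (A ^ (1 / p) * (2 * r) ^ (α / p)) := by
  have hp1 : p - 1 ≠ 0 := by linarith
  have hp0 : p ≠ 0 := by linarith
  rw [show 2 * (t * r) = t * (2 * r) by ring, Real.mul_rpow ht.le (by positivity),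
    Real.mul_rpow (by positivity) (by positivity), Real.mul_rpow (by positivity) (by positivity),
    Real.mul_rpow (by positivity) (by positivity), ← Real.rpow_natCast, ← Real.rpow_neg ht.le,
    ← Real.rpow_mul ht.le, ← Real.rpow_mul hA.le, ← Real.rpow_mul ht.le,
    ← Real.rpow_mul (by positivity : (0 : ℝ) ≤ 2 * r)]
  have e1 : 1 / (p - 1) * ((p - 1) / p) = 1 / p := by field_simp
  have e2 : α / (p - 1) * ((p - 1) / p) = α / p := by field_simp
  have e3 : (α - n) / p = -n + n * ((p - 1) / p) + α / p := by
    field_simp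
    ring
  rw [e1, e2, e3, Real.rpow_add ht, Real.rpow_add ht]
  ring

theorem lintegral_Ioc_zero_one_ofReal_rpow {β : ℝ} (hβ : -1 < β) :
    ∫⁻ t in Ioc (0 : ℝ) 1, ENNReal.ofReal (t ^ β) = ENNReal.ofReal (1 / (β + 1)) := by
  have hint : IntegrableOn (fun t : ℝ => t ^ β) (Ioc 0 1) :=
    (intervalIntegrable_iff_integrableOn_Ioc_of_le zero_le_one).1
      (intervalIntegral.intervalIntegrable_rpow' hβ)
  have hnonneg : 0 ≤ᵐ[volume.restrict (Ioc (0 : ℝ) 1)] fun t => t ^ β :=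
    ae_restrict_of_forall_mem measurableSet_Ioc fun t ht => Real.rpow_nonneg ht.1.le β
  rw [← ofReal_integral_eq_lintegral_ofReal hint hnonneg,
    ← intervalIntegral.integral_of_le zero_le_one, integral_rpow (Or.inl hβ),
    Real.zero_rpow (by linarith), Real.one_rpow, sub_zero]

theorem setLIntegral_Icc_zero_one_le_of_le_rpow {g : ℝ → ℝ≥0∞} {β : ℝ} (hβ : -1 < β)
    {C : ℝ≥0∞} (hg : ∀ t ∈ Ioc (0 : ℝ) 1, g t ≤ ENNReal.ofReal (t ^ β) * C) :
    ∫⁻ t in Icc (0 : ℝ) 1, g t ≤ ENNReal.ofReal (1 / (β + 1)) * C :=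
  calc ∫⁻ t in Icc (0 : ℝ) 1, g t
      = ∫⁻ t in Ioc (0 : ℝ) 1, g t := setLIntegral_congr Ioc_ae_eq_Icc.symm
    _ ≤ ∫⁻ t in Ioc (0 : ℝ) 1, ENNReal.ofReal (t ^ β) * C := setLIntegral_mono (by fun_prop) hg
    _ = ENNReal.ofReal (1 / (β + 1)) * C := by
        rw [lintegral_mul_const'' _ (by fun_prop), lintegral_Ioc_zero_one_ofReal_rpow hβ]

section NormedSpace

variable {E : Type*} [NormedAddCommGroup E] [NormedSpace ℝ E] [FiniteDimensional ℝ E]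
  [MeasurableSpace E] [BorelSpace E] (ν : Measure E) [ν.IsAddHaarMeasure]

theorem map_add_smul_addHaar (z : E) {t : ℝ} (ht : 0 < t) :
    ν.map (fun x => z + t • x) = ENNReal.ofReal ((t ^ finrank ℝ E)⁻¹) • ν := by
  change ν.map ((fun y => z + y) ∘ fun x => t • x) = _
  rw [← Measure.map_map (measurable_const_add z) (measurable_const_smul t),
    Measure.map_addHaar_smul ν ht.ne', Measure.map_smul, map_add_left_eq_self ν z,
    abs_of_pos (by positivity)]

theorem setLIntegral_closedBall_comp_add_smul {f : E → ℝ≥0∞} (hf : Measurable f) (z : E)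
    {t : ℝ} (ht : 0 < t) (r : ℝ) :
    ∫⁻ x in closedBall 0 r, f (z + t • x) ∂ν =
      ENNReal.ofReal ((t ^ finrank ℝ E)⁻¹) * ∫⁻ y in closedBall z (t * r), f y ∂ν := by
  have hpre : (fun x => z + t • x) ⁻¹' closedBall z (t * r) = closedBall 0 r := by
    ext x
    simp [dist_self_add_left, norm_smul, abs_of_pos ht, mul_le_mul_iff_right₀ ht]
  rw [← smul_eq_mul, ← lintegral_smul_measure, ← Measure.restrict_smul,
    ← map_add_smul_addHaar ν z ht, setLIntegral_map measurableSet_closedBall hf (by fun_prop),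
    hpre]

theorem setLIntegral_closedBall_lintegral_comp_add_smul (μ : Measure E) [SFinite μ]
    {f : E → ℝ≥0∞} (hf : Measurable f) {t : ℝ} (ht : 0 < t) (r : ℝ) :
    ∫⁻ x in closedBall 0 r, ∫⁻ z, f (z + t • x) ∂μ ∂ν =
      ENNReal.ofReal ((t ^ finrank ℝ E)⁻¹) * ∫⁻ y, f y * μ (closedBall y (t * r)) ∂ν := by
  have hmeas : AEMeasurable (Function.uncurry fun x z => f (z + t • x))
      ((ν.restrict (closedBall 0 r)).prod μ) := (hf.comp (by fun_prop)).aemeasurable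
  rw [lintegral_lintegral_swap hmeas,
    ← lintegral_setLIntegral_closedBall μ ν hf, ← lintegral_const_mul' _ _ ENNReal.ofReal_ne_top]
  exact lintegral_congr fun z => setLIntegral_closedBall_comp_add_smul ν hf z ht r

theorem setLIntegral_closedBall_lintegral_comp_add_smul_le (μ : Measure E) [SFinite μ]
    {A α p : ℝ} (hA : 0 < A) (hp : 1 < p) {f : E → ℝ≥0∞} (hf : Measurable f) {r t : ℝ}
    (hr : 0 < r) (ht : 0 < t) (ht1 : t ≤ 1)
    (hgrowth : ∫⁻ z, μ (closedBall z (2 * (t * r))) ^ (1 / (p - 1)) ∂μ ≤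
      ENNReal.ofReal (A ^ (1 / (p - 1)) * (2 * (t * r)) ^ (α / (p - 1))) * μ univ) :
    ∫⁻ x in closedBall 0 r, ∫⁻ z, f (z + t • x) ∂μ ∂ν ≤
      ENNReal.ofReal (t ^ ((α - finrank ℝ E) / p)) *
        (ENNReal.ofReal (A ^ (1 / p) * (2 * r) ^ (α / p)) *
          (ν (closedBall 0 r) * μ univ) ^ ((p - 1) / p) *
          (∫⁻ x in cthickening r (msupport μ), f x ^ p ∂ν) ^ (1 / p)) := by
  set n := finrank ℝ E
  set F := (∫⁻ x in cthickening r (msupport μ), f x ^ p ∂ν) ^ (1 / p)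
  set a := A ^ (1 / (p - 1)) * (2 * (t * r)) ^ (α / (p - 1))
  have he : 0 ≤ (p - 1) / p := div_nonneg (by linarith) (by linarith)
  have hvol : ν (closedBall 0 (t * r)) = ENNReal.ofReal (t ^ n) * ν (closedBall 0 r) := by
    rw [Measure.addHaar_closedBall' ν _ (by positivity), Measure.addHaar_closedBall' ν _ hr.le,
      mul_pow, ENNReal.ofReal_mul (by positivity), mul_assoc]
  have hcenter : ∫⁻ z, μ (closedBall z (2 * (t * r))) ^ (1 / (p - 1)) *
      ν (closedBall z (t * r)) ∂μ =
        ν (closedBall 0 (t * r)) * ∫⁻ z, μ (closedBall z (2 * (t * r))) ^ (1 / (p - 1)) ∂μ := by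
    simp only [Measure.addHaar_closedBall_center ν _ (t * r)]
    rw [lintegral_mul_const' _ _ measure_closedBall_lt_top.ne, mul_comm]
  calc ∫⁻ x in closedBall 0 r, ∫⁻ z, f (z + t • x) ∂μ ∂ν
      = ENNReal.ofReal ((t ^ n)⁻¹) * ∫⁻ y, f y * μ (closedBall y (t * r)) ∂ν :=
        setLIntegral_closedBall_lintegral_comp_add_smul ν μ hf ht r
    _ ≤ ENNReal.ofReal ((t ^ n)⁻¹) * (F * (ν (closedBall 0 (t * r)) *
          ∫⁻ z, μ (closedBall z (2 * (t * r))) ^ (1 / (p - 1)) ∂μ) ^ ((p - 1) / p)) := by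
        rw [← hcenter]
        gcongr
        exact lintegral_mul_measure_closedBall_le μ ν hp hf (by nlinarith)
    _ ≤ ENNReal.ofReal ((t ^ n)⁻¹) *
          (F * (ENNReal.ofReal (t ^ n) * ν (closedBall 0 r) * (ENNReal.ofReal a * μ univ)) ^
            ((p - 1) / p)) := by
        rw [hvol]
        gcongr
    _ = ENNReal.ofReal ((t ^ n)⁻¹ * (t ^ n * a) ^ ((p - 1) / p)) *
          ((ν (closedBall 0 r) * μ univ) ^ ((p - 1) / p) * F) := by
        rw [mul_mul_mul_comm, ← ENNReal.ofReal_mul (by positivity),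
          ENNReal.mul_rpow_of_nonneg _ _ he, ENNReal.ofReal_rpow_of_nonneg (by positivity) he,
          ENNReal.ofReal_mul (by positivity)]
        ring
    _ = _ := by
        rw [inv_pow_mul_rpow_growth_eq ht hA hr hp, ENNReal.ofReal_mul (by positivity)]
        ring

end NormedSpace

theorem stmt4_general (n : ℕ) (r₀ : ℝ)
    (μ : Measure (EuclideanSpace ℝ (Fin n))) [IsFiniteMeasure μ]
    (A α p : ℝ) (hA : 0 < A)
    (hp : max 1 ((n : ℝ) - α) < p)
    (hgrowth : ∀ s : ℝ, 0 < s → s < 2 * r₀ →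
      (∫⁻ z, μ (closedBall z s) ^ (1 / (p - 1)) ∂μ) ≤
        ENNReal.ofReal (A ^ (1 / (p - 1)) * s ^ (α / (p - 1))) * μ univ)
    (f : EuclideanSpace ℝ (Fin n) → ℝ≥0∞) (hf : Measurable f)
    (r : ℝ) (hr : 0 < r) (hrr₀ : r < r₀) :
    (∫⁻ x in closedBall (0 : EuclideanSpace ℝ (Fin n)) r,
        ∫⁻ t in Icc (0 : ℝ) 1, ∫⁻ z, f (z + t • x) ∂μ ∂volume ∂volume) ≤
      ENNReal.ofReal (2 ^ (α / p) * A ^ (1 / p) * p / (p - n + α) * r ^ (α / p)) *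
        (volume (closedBall (0 : EuclideanSpace ℝ (Fin n)) r) * μ univ) ^ ((p - 1) / p) *
        (∫⁻ x in cthickening r (msupport μ), f x ^ p ∂volume) ^ (1 / p) := by
  have hp1 : 1 < p := (le_max_left _ _).trans_lt hp
  have hβ : -1 < (α - n) / p := by
    rw [lt_div_iff₀ (by linarith)]
    linarith [(le_max_right _ _).trans_lt hp]
  set C := ENNReal.ofReal (A ^ (1 / p) * (2 * r) ^ (α / p)) *
    (volume (closedBall (0 : EuclideanSpace ℝ (Fin n)) r) * μ univ) ^ ((p - 1) / p) *
    (∫⁻ x in cthickening r (msupport μ), f x ^ p ∂volume) ^ (1 / p)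
  have hbound : ∀ t ∈ Ioc (0 : ℝ) 1, ∫⁻ x in closedBall 0 r, ∫⁻ z, f (z + t • x) ∂μ ∂volume ≤
      ENNReal.ofReal (t ^ ((α - n) / p)) * C := by
    rintro t ⟨ht, ht1⟩
    have htr : 2 * (t * r) < 2 * r₀ := by nlinarith
    have h := setLIntegral_closedBall_lintegral_comp_add_smul_le volume μ hA hp1 hf hr ht ht1
      (hgrowth _ (by positivity) htr)
    rwa [finrank_euclideanSpace_fin] at h
  have hmeas : AEMeasurable (Function.uncurry fun x (t : ℝ) => ∫⁻ z, f (z + t • x) ∂μ)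
      ((volume.restrict (closedBall 0 r)).prod (volume.restrict (Icc 0 1))) :=
    (hf.comp (continuous_snd.add (continuous_fst.snd.smul continuous_fst.fst)).measurable
      ).lintegral_prod_right'.aemeasurable
  calc _ = ∫⁻ t in Icc (0 : ℝ) 1, ∫⁻ x in closedBall 0 r, ∫⁻ z, f (z + t • x) ∂μ ∂volume :=
        lintegral_lintegral_swap hmeas
    _ ≤ ENNReal.ofReal (1 / ((α - n) / p + 1)) * C :=
        setLIntegral_Icc_zero_one_le_of_le_rpow hβ hbound
    _ = _ := by
        rw [← mul_assoc, ← mul_assoc, ← ENNReal.ofReal_mul (one_div_pos.2 (by linarith)).le]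
        congr 3
        rw [Real.mul_rpow zero_le_two hr.le]
        field_simp
        ring

/-- Let `μ` be a finite Borel measure on `ℝ^n` satisfying the weak
growth condition `∫ μ(B(z,s))^{1/(p-1)} dμ(z) ≤ A^{1/(p-1)} · s^{α/(p-1)} · μ(ℝ^n)`
for all `s ∈ (0, 2r₀)` (closed balls), where `0 ≤ α ≤ n` and `p > max{1, n-α}`.
Then for every Borel `f : ℝ^n → [0,∞]` and every `r ∈ (0, r₀)`:
`∫_{B(0,r)} ∫_0^1 ∫ f(z + t·x) dμ(z) dt dx
  ≤ (2^{α/p}·A^{1/p}·p/(p-n+α)) · r^{α/p} · [Leb(B(0,r))·μ(ℝ^n)]^{(p-1)/p}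
      · ‖f‖_{L^p(N(spt μ, r))}`. -/
theorem stmt4 (n : ℕ) (hn : 1 ≤ n) (r₀ : ℝ) (hr₀ : 0 < r₀)
    (μ : Measure (EuclideanSpace ℝ (Fin n))) [IsFiniteMeasure μ]
    (A α p : ℝ) (hA : 0 < A) (hα0 : 0 ≤ α) (hαn : α ≤ n)
    (hp : max 1 ((n : ℝ) - α) < p)
    (hgrowth : ∀ s : ℝ, 0 < s → s < 2 * r₀ →
      (∫⁻ z, μ (closedBall z s) ^ (1 / (p - 1)) ∂μ) ≤
        ENNReal.ofReal (A ^ (1 / (p - 1)) * s ^ (α / (p - 1))) * μ univ)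
    (f : EuclideanSpace ℝ (Fin n) → ℝ≥0∞) (hf : Measurable f)
    (r : ℝ) (hr : 0 < r) (hrr₀ : r < r₀) :
    (∫⁻ x in closedBall (0 : EuclideanSpace ℝ (Fin n)) r,
        ∫⁻ t in Icc (0 : ℝ) 1, ∫⁻ z, f (z + t • x) ∂μ ∂volume ∂volume) ≤
      ENNReal.ofReal (2 ^ (α / p) * A ^ (1 / p) * p / (p - n + α) * r ^ (α / p)) *
        (volume (closedBall (0 : EuclideanSpace ℝ (Fin n)) r) * μ univ) ^ ((p - 1) / p) *
        (∫⁻ x in cthickening r (msupport μ), f x ^ p ∂volume) ^ (1 / p) :=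
  stmt4_general n r₀ μ A α p hA hp hgrowth f hf r hr hrr₀
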